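/- arXiv:1604.07846 — 7 statements merged into one kernel-verified Lean document; each statement's English description precedes it below -/
import Mathlib

section
/- For all real α, β and all n ≥ 1, the derivative of the extended Jacobi polynomial satisfies d/dt J_n^{α,β}(t) = (1/2) J_{n-1}^{α+1,β+1}(t). -/
open Finset MeasureTheory

/-- Pochhammer symbol `(a)_m` (rising factorial). -/
noncomputable def poch (a : ℝ) (m : ℕ) : ℝ := (ascPochhammer ℝ m).eval a

/-- Extended Jacobi polynomial `J_n^{α,β}(t)`.  Terms with vanishing denominator
(which are exactly the terms with index below `ι₀`) are `0` by the division
convention, so this agrees with the paper's definition. -/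
noncomputable def J (α β : ℝ) (n : ℕ) (t : ℝ) : ℝ :=
  ∑ k ∈ Finset.range (n + 1),
    poch ((k : ℝ) + α + 1) (n - k) /
      (((n - k).factorial : ℝ) * (k.factorial : ℝ) *
        poch ((n : ℝ) + α + β + (k : ℝ) + 1) (n - k)) *
      ((t - 1) / 2) ^ k

/-- Classical Jacobi polynomial `P_n^{(α,β)}(t)`. -/
noncomputable def P (α β : ℝ) (n : ℕ) (t : ℝ) : ℝ :=
  ∑ k ∈ Finset.range (n + 1),
    poch ((k : ℝ) + α + 1) (n - k) * poch ((n : ℝ) + α + β + 1) k /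
      (((n - k).factorial : ℝ) * (k.factorial : ℝ)) * ((t - 1) / 2) ^ k

noncomputable def jacobiCoeff (α β : ℝ) (n k : ℕ) : ℝ :=
  poch ((k : ℝ) + α + 1) (n - k) /
    (((n - k).factorial : ℝ) * (k.factorial : ℝ) *
      poch ((n : ℝ) + α + β + (k : ℝ) + 1) (n - k))

lemma J_eq_sum_jacobiCoeff (α β : ℝ) (n : ℕ) :
    J α β n = fun t => ∑ k ∈ range (n + 1), jacobiCoeff α β n k * ((t - 1) / 2) ^ k :=
  rfl

lemma hasDerivAt_sum_mul_pow_sub_one_div_two (c : ℕ → ℝ) (N : ℕ) (t : ℝ) :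
    HasDerivAt (fun t => ∑ k ∈ range (N + 1), c k * ((t - 1) / 2) ^ k)
      ((1 / 2) * ∑ k ∈ range N, ((k : ℝ) + 1) * c (k + 1) * ((t - 1) / 2) ^ k) t := by
  have hx : HasDerivAt (fun t : ℝ => (t - 1) / 2) (1 / 2) t := by
    simpa using ((hasDerivAt_id t).sub_const 1).div_const 2
  refine (HasDerivAt.fun_sum fun k _ => (hx.fun_pow k).const_mul (c k)).congr_deriv ?_
  rw [sum_range_succ', mul_sum]
  simp only [Nat.cast_zero, zero_mul, mul_zero, add_zero, Nat.cast_add, Nat.cast_one,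
    Nat.add_sub_cancel]
  exact sum_congr rfl fun k _ => by ring

/- The shift `(n, k, α, β) ↦ (n - 1, k - 1, α + 1, β + 1)` leaves both Pochhammer factors unchanged
and only strips the factor `k` from `k!`; in particular a zero denominator (a term below `ι₀`)
stays zero, so no case split on `ι₀` is needed. -/
lemma succ_mul_jacobiCoeff_succ (α β : ℝ) (m k : ℕ) :
    ((k : ℝ) + 1) * jacobiCoeff α β (m + 1) (k + 1) = jacobiCoeff (α + 1) (β + 1) m k := by
  have hk : ((k : ℝ) + 1) ≠ 0 := by positivity
  simp only [jacobiCoeff, Nat.add_sub_add_right, Nat.factorial_succ, Nat.cast_mul, Nat.cast_add,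
    Nat.cast_one]
  rw [show (k : ℝ) + 1 + α + 1 = k + (α + 1) + 1 by ring,
    show (m : ℝ) + 1 + α + β + (k + 1) + 1 = m + (α + 1) + (β + 1) + k + 1 by ring]
  field_simp

theorem stmt1 (α β : ℝ) (n : ℕ) (hn : 1 ≤ n) (t : ℝ) :
    deriv (J α β n) t = (1 / 2) * J (α + 1) (β + 1) (n - 1) t := by
  obtain ⟨m, rfl⟩ := Nat.exists_eq_add_of_le' hn
  rw [J_eq_sum_jacobiCoeff, (hasDerivAt_sum_mul_pow_sub_one_div_two _ _ t).deriv,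
    Nat.add_sub_cancel, J_eq_sum_jacobiCoeff]
  simp only [succ_mul_jacobiCoeff_succ]
end

section
/- For real α, nonnegative integer m, and n ≥ m + max{0, ⌊-α⌋}, the extended Jacobi polynomial satisfies J_n^{α,-m}(t) = ((n-m)! / (2^m n!)) · (1+t)^m · J_{n-m}^{α,m}(t). -/
/-!
Multiplying `J_n^{α,β}` by `(n+α+β+1)_n` gives the classical Jacobi polynomial `P_n^{(α,β)}`,
and Chu–Vandermonde together with trinomial revision turn its defining sum into the symmetric form
`∑ᵢ C(α+n, n-i) C(β+n, i) ((t-1)/2)^i ((t+1)/2)^(n-i)`. For `β = -m` the factor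
`C(n-m, i)` kills every term with `i > n-m`, so all surviving terms carry `((t+1)/2)^m`, and their
coefficients are `C(α+n, m) / C(n, m)` times those of `P_{n-m}^{(α,m)}`. The hypothesis
on `⌊-α⌋` says `α + n - m + 1 > 0`, which keeps all the Pochhammer normalisations positive.
-/

open Finset MeasureTheory

lemma poch_add (a : ℝ) (k l : ℕ) : poch a (k + l) = poch a k * poch (a + k) l := by
  simp [poch, ← ascPochhammer_mul, Polynomial.eval_comp]

lemma poch_pos {a : ℝ} (ha : 0 < a) (k : ℕ) : 0 < poch a k := ascPochhammer_pos k a ha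

lemma poch_eq_factorial_mul_choose (r : ℝ) (k : ℕ) :
    poch (r + 1) k = k.factorial * Ring.choose (r + k) k := by
  rw [Ring.choose, poch, ← Polynomial.ascPochhammer_smeval_eq_eval,
    ← Ring.factorial_nsmul_multichoose_eq_ascPochhammer, nsmul_eq_mul]
  ring_nf

lemma Ring.choose_sub_mul_choose {R : Type*} [CommRing R] [BinomialRing R] (r : R) {i k n : ℕ}
    (hik : i ≤ k) (hkn : k ≤ n) :
    Ring.choose (r + n) (n - i) * (n - i).choose (k - i) =
      Ring.choose (r + n) (n - k) * Ring.choose (r + k) (k - i) := by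
  have h := Ring.choose_smul_choose (r + n) (show n - k ≤ n - i by omega)
  rw [Nat.choose_symm_of_eq_add (show n - i = (n - k) + (k - i) by omega), nsmul_eq_mul] at h
  rw [mul_comm, h, show n - i - (n - k) = k - i by omega, Nat.cast_sub hkn]
  ring_nf

theorem sum_choose_mul_choose_mul_pow_eq {R : Type*} [CommRing R] [BinomialRing R]
    (a b z : R) (n : ℕ) :
    ∑ i ∈ range (n + 1), Ring.choose (a + n) (n - i) * Ring.choose (b + n) i * z ^ i *
        (z + 1) ^ (n - i) =
      ∑ k ∈ range (n + 1),
        Ring.choose (a + n) (n - k) * Ring.choose (a + b + n + k) k * z ^ k := by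
  have expand : ∀ i ∈ range (n + 1),
      Ring.choose (a + n) (n - i) * Ring.choose (b + n) i * z ^ i * (z + 1) ^ (n - i) =
        ∑ k ∈ Ico i (n + 1),
        Ring.choose (a + n) (n - i) * (n - i).choose (k - i) * Ring.choose (b + n) i * z ^ k := by
    intro i hi
    rw [mem_range] at hi
    rw [add_pow, mul_sum, sum_Ico_eq_sum_range, show n + 1 - i = n - i + 1 by omega]
    refine sum_congr rfl fun l _ => ?_
    rw [Nat.add_sub_cancel_left, pow_add, one_pow]
    ring
  have collapse : ∀ k ∈ range (n + 1), ∑ i ∈ range (k + 1),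
      Ring.choose (a + n) (n - i) * (n - i).choose (k - i) * Ring.choose (b + n) i * z ^ k =
        Ring.choose (a + n) (n - k) * Ring.choose (a + b + n + k) k * z ^ k := by
    intro k hk
    rw [mem_range] at hk
    have hvand := Ring.add_choose_eq (r := b + n) (s := a + k) k (Commute.all _ _)
    rw [Nat.sum_antidiagonal_eq_sum_range_succ
      (fun i j => Ring.choose (b + n) i * Ring.choose (a + k) j)] at hvand
    rw [show a + b + n + k = b + n + (a + k) by ring, hvand, mul_sum, sum_mul]
    refine sum_congr rfl fun i hi => ?_
    rw [Ring.choose_sub_mul_choose a (by simpa [Nat.lt_succ_iff] using hi) (by omega)]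
    ring
  rw [sum_congr rfl expand, range_eq_Ico, sum_Ico_Ico_comm, ← range_eq_Ico]
  refine sum_congr rfl fun k hk => ?_
  rw [← collapse k hk, range_eq_Ico]

theorem P_eq_sum_choose_mul_pow (α β : ℝ) (n : ℕ) (t : ℝ) :
    P α β n t = ∑ i ∈ range (n + 1), Ring.choose (α + n) (n - i) * Ring.choose (β + n) i *
      ((t - 1) / 2) ^ i * ((t + 1) / 2) ^ (n - i) := by
  rw [show (t + 1) / 2 = (t - 1) / 2 + 1 by ring, sum_choose_mul_choose_mul_pow_eq, P]
  refine sum_congr rfl fun k hk => ?_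
  have hkn : k ≤ n := Nat.lt_succ_iff.mp (mem_range.mp hk)
  rw [poch_eq_factorial_mul_choose, poch_eq_factorial_mul_choose, Nat.cast_sub hkn,
    show (k : ℝ) + α + (n - k) = α + n by ring,
    show (n : ℝ) + α + β + k = α + β + n + k by ring]
  have : ((n - k).factorial : ℝ) * k.factorial ≠ 0 := by positivity
  field_simp

theorem choose_mul_P_neg_natCast (α : ℝ) (s m : ℕ) (t : ℝ) :
    ((s + m).choose m : ℝ) * P α (-m) (s + m) t =
      Ring.choose (α + (s + m : ℕ)) m * ((t + 1) / 2) ^ m * P α m s t := by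
  have hβ : -(m : ℝ) + (s + m : ℕ) = s := by push_cast; ring
  rw [P_eq_sum_choose_mul_pow, P_eq_sum_choose_mul_pow, hβ, mul_sum, mul_sum]
  have hvanish : ∀ i ∈ range (s + m + 1), i ∉ range (s + 1) →
      ((s + m).choose m : ℝ) * (Ring.choose (α + (s + m : ℕ)) (s + m - i) *
        Ring.choose (s : ℝ) i * ((t - 1) / 2) ^ i * ((t + 1) / 2) ^ (s + m - i)) = 0 := by
    intro i _ hi
    have hsi : s < i := by simpa using hi
    simp [Ring.choose_natCast, Nat.choose_eq_zero_of_lt hsi]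
  rw [← sum_subset (range_subset_range.mpr (by omega)) hvanish]
  refine sum_congr rfl fun i hi => ?_
  have his : i ≤ s := Nat.lt_succ_iff.mp (mem_range.mp hi)
  have hrev := Ring.choose_sub_mul_choose α his (Nat.le_add_right s m)
  rw [show s + m - s = m by omega] at hrev
  have hnat : ((s + m).choose m : ℝ) * s.choose i =
      (s + m).choose i * (s + m - i).choose (s - i) := by
    rw [← Nat.choose_symm_add]
    exact_mod_cast Nat.choose_mul his
  have hpow : ((t + 1) / 2) ^ (s + m - i) = ((t + 1) / 2) ^ m * ((t + 1) / 2) ^ (s - i) := by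
    rw [← pow_add]
    congr 1
    omega
  rw [Ring.choose_natCast, show (m : ℝ) + s = (s + m : ℕ) by push_cast; ring,
    Ring.choose_natCast, hpow]
  linear_combination (((t - 1) / 2) ^ i * ((t + 1) / 2) ^ m * ((t + 1) / 2) ^ (s - i)) *
    (Ring.choose (α + (s + m : ℕ)) (s + m - i) * hnat + ((s + m).choose i : ℝ) * hrev)

theorem poch_mul_J_eq_P (α β : ℝ) (n : ℕ) (t : ℝ) (h : poch (n + α + β + 1) n ≠ 0) :
    poch (n + α + β + 1) n * J α β n t = P α β n t := by
  rw [J, P, mul_sum]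
  refine sum_congr rfl fun k hk => ?_
  have hsplit := poch_add (n + α + β + 1) k (n - k)
  rw [Nat.add_sub_cancel' (Nat.lt_succ_iff.mp (mem_range.mp hk)),
    show (n : ℝ) + α + β + 1 + k = n + α + β + k + 1 by ring] at hsplit
  rw [hsplit] at h ⊢
  have : ((n - k).factorial : ℝ) * k.factorial ≠ 0 := by positivity
  field_simp [right_ne_zero_of_mul h]

theorem J_neg_natCast_eq (α : ℝ) (s m : ℕ) (hα : 0 < α + s + 1) (t : ℝ) :
    J α (-(m : ℝ)) (s + m) t =
      (s.factorial : ℝ) / (2 ^ m * ((s + m).factorial : ℝ)) * (1 + t) ^ m *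
        J α (m : ℝ) s t := by
  have hA := poch_pos hα m
  have hB := poch_pos (a := α + (s + m : ℕ) + 1) (by push_cast; linarith) s
  have hJn := poch_mul_J_eq_P α (-m) (s + m) t
  rw [show ((s + m : ℕ) : ℝ) + α + -m + 1 = α + s + 1 by push_cast; ring, Nat.add_comm s m,
    poch_add, show α + s + 1 + m = α + (m + s : ℕ) + 1 by push_cast; ring,
    Nat.add_comm m s] at hJn
  have hJs := poch_mul_J_eq_P α m s t
  rw [show (s : ℝ) + α + m + 1 = α + (s + m : ℕ) + 1 by push_cast; ring] at hJs
  have hP := choose_mul_P_neg_natCast α s m t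
  have hchoose := poch_eq_factorial_mul_choose (α + s) m
  have hfact : ((s + m).choose m : ℝ) * m.factorial * s.factorial = (s + m).factorial := by
    exact_mod_cast Nat.add_sub_cancel s m ▸
      Nat.choose_mul_factorial_mul_factorial (Nat.le_add_left m s)
  have hw : ((t + 1) / 2) ^ m * 2 ^ m = (1 + t) ^ m := by
    rw [← mul_pow]
    ring_nf
  have hAB := (mul_pos hA hB).ne'
  push_cast at hP hchoose
  rw [← add_assoc] at hP
  apply mul_left_cancel₀ hAB
  rw [hJn hAB]
  field_simp
  -- `2^m n! P_n = 2^m m! s! C(n,m) P_n = s! (m! C(α+n,m)) (1+t)^m P_s`, and `P_s = (α+n+1)_s J_s`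
  linear_combination (-(P α (-m) (s + m) t * 2 ^ m)) * hfact
    + (2 ^ m * m.factorial * s.factorial) * hP
    - (poch (α + (s + m : ℕ) + 1) s * s.factorial * (1 + t) ^ m * J α m s t) * hchoose
    - (m.factorial * Ring.choose (α + s + m) m * s.factorial * (1 + t) ^ m) * hJs hB.ne'
    + (m.factorial * Ring.choose (α + s + m) m * s.factorial * P α m s t) * hw

theorem stmt2 (α : ℝ) (m n : ℕ) (hn : (m : ℤ) + max 0 ⌊-α⌋ ≤ (n : ℤ)) (t : ℝ) :
    J α (-(m : ℝ)) n t =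
      ((n - m).factorial : ℝ) / (2 ^ m * (n.factorial : ℝ)) * (1 + t) ^ m *
        J α (m : ℝ) (n - m) t := by
  obtain ⟨s, rfl⟩ : ∃ s, n = s + m := ⟨n - m, by omega⟩
  have hα : 0 < α + s + 1 := by
    have hfloor : (⌊-α⌋ : ℝ) ≤ s := by
      exact_mod_cast (show ⌊-α⌋ ≤ (s : ℤ) by omega)
    linarith [Int.lt_floor_add_one (-α)]
  rw [Nat.add_sub_cancel]
  exact J_neg_natCast_eq α s m hα t
end

section
/- For every real β, nonnegative integer ℓ, and n ≥ ℓ, the extended Jacobi polynomial satisfies J_n^{-ℓ,β}(t) = ((-1)^ℓ (n-ℓ)! / (2^ℓ n!)) · (1-t)^ℓ · J_{n-ℓ}^{ℓ,β}(t). -/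
open Finset MeasureTheory

lemma poch_neg_natCast_eq_zero {k s : ℕ} (h : k < s) : poch (-(k : ℝ)) s = 0 :=
  ascPochhammer_eval_neg_coe_nat_of_lt h

lemma factorial_mul_poch_natCast_add_one (r s : ℕ) :
    (r.factorial : ℝ) * poch ((r : ℝ) + 1) s = ((r + s).factorial : ℝ) :=
  factorial_mul_ascPochhammer ℝ r s

noncomputable def jacobiTerm (α β : ℝ) (n : ℕ) (t : ℝ) (k : ℕ) : ℝ :=
  poch ((k : ℝ) + α + 1) (n - k) /
    (((n - k).factorial : ℝ) * (k.factorial : ℝ) *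
      poch ((n : ℝ) + α + β + (k : ℝ) + 1) (n - k)) *
    ((t - 1) / 2) ^ k

lemma J_eq_sum_jacobiTerm (α β : ℝ) (n : ℕ) (t : ℝ) :
    J α β n t = ∑ k ∈ range (n + 1), jacobiTerm α β n t k := rfl

lemma jacobiTerm_neg_natCast_of_lt (β t : ℝ) {ℓ n k : ℕ} (hk : k < ℓ) (hℓ : ℓ ≤ n) :
    jacobiTerm (-(ℓ : ℝ)) β n t k = 0 := by
  have hroot : (k : ℝ) + -(ℓ : ℝ) + 1 = -((ℓ - 1 - k : ℕ) : ℝ) := by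
    rw [Nat.cast_sub (by omega), Nat.cast_sub (by omega)]
    push_cast
    ring
  rw [jacobiTerm, hroot, poch_neg_natCast_eq_zero (by omega : ℓ - 1 - k < n - k)]
  simp only [zero_div, zero_mul]

lemma jacobiTerm_neg_natCast_add (β t : ℝ) {ℓ m j : ℕ} (hj : j ≤ m) :
    jacobiTerm (-(ℓ : ℝ)) β (ℓ + m) t (ℓ + j) =
      (m.factorial : ℝ) / ((ℓ + m).factorial : ℝ) * ((t - 1) / 2) ^ ℓ *
        jacobiTerm (ℓ : ℝ) β m t j := by
  have hnum : (j.factorial : ℝ) * poch ((j : ℝ) + 1) (m - j) = (m.factorial : ℝ) := by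
    rw [factorial_mul_poch_natCast_add_one, Nat.add_sub_cancel' hj]
  have hnum' : ((ℓ + j).factorial : ℝ) * poch ((j : ℝ) + ℓ + 1) (m - j) =
      ((ℓ + m).factorial : ℝ) := by
    rw [← Nat.cast_add, Nat.add_comm ℓ j, factorial_mul_poch_natCast_add_one]
    congr 2
    omega
  have hD : ((ℓ + m : ℕ) : ℝ) + -(ℓ : ℝ) + β + ((ℓ + j : ℕ) : ℝ) + 1 =
      (m : ℝ) + ℓ + β + j + 1 := by
    push_cast
    ring
  have hN : ((ℓ + j : ℕ) : ℝ) + -(ℓ : ℝ) + 1 = (j : ℝ) + 1 := by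
    push_cast
    ring
  rw [jacobiTerm, jacobiTerm, hD, hN, show ℓ + m - (ℓ + j) = m - j by omega]
  set D := poch ((m : ℝ) + ℓ + β + j + 1) (m - j)
  -- a vanishing denominator makes both sides `0` through `x / 0 = 0`
  rcases eq_or_ne D 0 with hD0 | hD0
  · simp [hD0]
  field_simp
  linear_combination ((t - 1) / 2) ^ (ℓ + j) *
    (((ℓ + m).factorial : ℝ) * hnum - (m.factorial : ℝ) * hnum')

lemma J_neg_natCast_add (β t : ℝ) (ℓ m : ℕ) :
    J (-(ℓ : ℝ)) β (ℓ + m) t =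
      (m.factorial : ℝ) / ((ℓ + m).factorial : ℝ) * ((t - 1) / 2) ^ ℓ * J (ℓ : ℝ) β m t := by
  rw [J_eq_sum_jacobiTerm, J_eq_sum_jacobiTerm, Nat.add_assoc, sum_range_add,
    sum_eq_zero fun k hk =>
      jacobiTerm_neg_natCast_of_lt β t (mem_range.1 hk) (Nat.le_add_right ℓ m),
    zero_add, mul_sum]
  exact sum_congr rfl fun j hj =>
    jacobiTerm_neg_natCast_add β t (Nat.lt_succ_iff.1 (mem_range.1 hj))

theorem stmt3 (β : ℝ) (ℓ n : ℕ) (h : ℓ ≤ n) (t : ℝ) :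
    J (-(ℓ : ℝ)) β n t =
      (-1) ^ ℓ * ((n - ℓ).factorial : ℝ) / (2 ^ ℓ * (n.factorial : ℝ)) * (1 - t) ^ ℓ *
        J (ℓ : ℝ) β (n - ℓ) t := by
  obtain ⟨m, rfl⟩ := Nat.exists_eq_add_of_le h
  have hsign : (-1 : ℝ) ^ ℓ / 2 ^ ℓ * (1 - t) ^ ℓ = ((t - 1) / 2) ^ ℓ := by
    rw [← div_pow, ← mul_pow]
    congr 1
    ring
  rw [Nat.add_sub_cancel_left, J_neg_natCast_add, ← hsign]
  ring
end

section
/- For nonnegative integers ℓ, m and n ≥ m + ℓ, the extended Jacobi polynomial satisfies J_n^{-ℓ,-m}(t) = ((-1)^ℓ (n-m-ℓ)! / (2^{ℓ+m} n!)) · (1-t)^ℓ (1+t)^m · J_{n-ℓ-m}^{ℓ,m}(t). -/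
open Finset MeasureTheory

/-!
With `n = N + ℓ + m` and `x = (t - 1) / 2`, writing the Pochhammer symbols as quotients of
factorials turns `J_n^{-ℓ,-m}` into a multiple of `∑ₖ C(N+k, N+ℓ) C(n, k) xᵏ` (its terms with
`k < ℓ` vanish) and `J_N^{ℓ,m}` into a multiple of `∑ⱼ C(n+j, ℓ+j) C(N, j) xʲ`.
The theorem then reduces to
`∑ₖ C(N+k, N+ℓ) C(n, k) xᵏ = xˡ (1+x)ᵐ ∑ⱼ C(n+j, ℓ+j) C(N, j) xʲ`,
which follows by induction on `N`, for all `ℓ, m` simultaneously, from Pascal's rule.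
-/

open Nat

lemma poch_eq_prod (a : ℝ) (k : ℕ) : poch a k = ∏ i ∈ range k, (a + i) := by
  induction k with
  | zero => simp [poch]
  | succ k ih => rw [poch, ascPochhammer_succ_eval, ← poch, ih, prod_range_succ]

lemma poch_eq_zero_of_add_eq_zero {a : ℝ} {k j : ℕ} (hj : j < k) (ha : a + j = 0) :
    poch a k = 0 := by
  rw [poch_eq_prod]
  exact prod_eq_zero (mem_range.2 hj) ha

lemma poch_natCast_add_one (b k : ℕ) : poch ((b : ℝ) + 1) k = ((b + k)! : ℝ) / b ! := by
  rw [eq_div_iff (by positivity), mul_comm]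
  exact factorial_mul_ascPochhammer ℝ b k

noncomputable def negJacobiSum (N r M : ℕ) (x : ℝ) : ℝ :=
  ∑ k ∈ range (M + 1), ((N + k).choose r * M.choose k : ℝ) * x ^ k

noncomputable def posJacobiSum (a b N : ℕ) (x : ℝ) : ℝ :=
  ∑ j ∈ range (N + 1), ((a + j).choose (b + j) * N.choose j : ℝ) * x ^ j

lemma negJacobiSum_succ_succ (N r M : ℕ) (x : ℝ) :
    negJacobiSum (N + 1) (r + 1) M x = negJacobiSum N r M x + negJacobiSum N (r + 1) M x := by
  simp only [negJacobiSum, ← sum_add_distrib]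
  refine sum_congr rfl fun k _ => ?_
  rw [show N + 1 + k = N + k + 1 by omega, choose_succ_succ]
  push_cast
  ring

lemma negJacobiSum_zero (ℓ m : ℕ) (x : ℝ) :
    negJacobiSum 0 ℓ (ℓ + m) x = (ℓ + m).choose ℓ * x ^ ℓ * (1 + x) ^ m := by
  have hlow : ∑ k ∈ range ℓ, (((0 + k).choose ℓ * (ℓ + m).choose k : ℕ) : ℝ) * x ^ k = 0 :=
    sum_eq_zero fun k hk => by simp [choose_eq_zero_of_lt (mem_range.1 hk)]
  rw [negJacobiSum, show ℓ + m + 1 = ℓ + (m + 1) by omega, sum_range_add]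
  push_cast at hlow ⊢
  rw [hlow, zero_add, add_comm 1 x, add_pow, mul_sum]
  refine sum_congr rfl fun s hs => ?_
  have hs : s ≤ m := by have := mem_range.1 hs; omega
  have hchoose : (ℓ + s).choose ℓ * (ℓ + m).choose (ℓ + s) = (ℓ + m).choose ℓ * m.choose s := by
    simpa [Nat.mul_comm] using choose_mul (n := ℓ + m) (k := ℓ + s) (s := ℓ) (by omega)
  rw [zero_add, ← cast_mul, hchoose]
  push_cast
  ring

lemma posJacobiSum_add_posJacobiSum_succ (a b N : ℕ) (x : ℝ) :
    posJacobiSum a b N x + posJacobiSum a (b + 1) N x = posJacobiSum (a + 1) (b + 1) N x := by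
  simp only [posJacobiSum, ← sum_add_distrib]
  refine sum_congr rfl fun j _ => ?_
  rw [show a + 1 + j = a + j + 1 by omega, show b + 1 + j = b + j + 1 by omega, choose_succ_succ]
  push_cast
  ring

lemma posJacobiSum_succ (a b N : ℕ) (x : ℝ) :
    posJacobiSum a b (N + 1) x = posJacobiSum a b N x + x * posJacobiSum (a + 1) (b + 1) N x := by
  have hN : posJacobiSum a b N x =
      ∑ j ∈ range (N + 2), ((a + j).choose (b + j) * N.choose j : ℝ) * x ^ j := by
    rw [posJacobiSum, sum_range_succ _ (N + 1), choose_succ_self]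
    simp
  rw [posJacobiSum, hN, posJacobiSum, sum_range_succ', sum_range_succ' _ (N + 1), mul_sum,
    add_right_comm, ← sum_add_distrib, choose_zero_right, choose_zero_right]
  congr 1
  refine sum_congr rfl fun j _ => ?_
  rw [choose_succ_succ, show a + 1 + j = a + (j + 1) by omega,
    show b + 1 + j = b + (j + 1) by omega]
  push_cast
  ring

lemma negJacobiSum_eq_mul_posJacobiSum (N ℓ m : ℕ) (x : ℝ) :
    negJacobiSum N (N + ℓ) (N + ℓ + m) x =
      x ^ ℓ * (1 + x) ^ m * posJacobiSum (N + ℓ + m) ℓ N x := by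
  induction N generalizing ℓ m with
  | zero =>
    rw [negJacobiSum_zero]
    simp [posJacobiSum]
    ring
  | succ N ih =>
    have h₁ := ih ℓ (m + 1)
    have h₂ := ih (ℓ + 1) m
    rw [show N + ℓ + (m + 1) = N + ℓ + m + 1 by omega] at h₁
    rw [show N + (ℓ + 1) = N + ℓ + 1 by omega, show N + ℓ + 1 + m = N + ℓ + m + 1 by omega] at h₂
    rw [show N + 1 + ℓ + m = N + ℓ + m + 1 by omega, show N + 1 + ℓ = N + ℓ + 1 by omega,
      negJacobiSum_succ_succ, h₁, h₂, posJacobiSum_succ,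
      ← posJacobiSum_add_posJacobiSum_succ (N + ℓ + m + 1) ℓ N x]
    ring

lemma J_neg_natCast (ℓ m N : ℕ) (t : ℝ) :
    J (-(ℓ : ℝ)) (-(m : ℝ)) (N + ℓ + m) t =
      (N + ℓ)! * (N + m)! / ((N + ℓ + m)! * (2 * N + ℓ + m)!) *
        negJacobiSum N (N + ℓ) (N + ℓ + m) ((t - 1) / 2) := by
  rw [J, negJacobiSum, mul_sum]
  refine sum_congr rfl fun k hk => ?_
  have hk : k ≤ N + ℓ + m := by have := mem_range.1 hk; omega
  by_cases hkℓ : k < ℓ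
  · have hpoch : poch ((k : ℝ) + -(ℓ : ℝ) + 1) (N + ℓ + m - k) = 0 := by
      refine poch_eq_zero_of_add_eq_zero (j := ℓ - 1 - k) (by omega) ?_
      rw [cast_sub (by omega), cast_sub (by omega)]
      ring
    simp [hpoch, choose_eq_zero_of_lt (show N + k < N + ℓ by omega)]
  obtain ⟨u, rfl⟩ : ∃ u, k = ℓ + u := ⟨k - ℓ, by omega⟩
  obtain ⟨v, hv⟩ : ∃ v, N + m = u + v := ⟨N + m - u, by omega⟩
  have e₁ : ((ℓ + u : ℕ) : ℝ) + -(ℓ : ℝ) + 1 = (u : ℝ) + 1 := by push_cast; ring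
  have e₂ : ((N + ℓ + m : ℕ) : ℝ) + -(ℓ : ℝ) + -(m : ℝ) + ((ℓ + u : ℕ) : ℝ) + 1 =
      ((N + ℓ + u : ℕ) : ℝ) + 1 := by push_cast; ring
  rw [show N + ℓ + m - (ℓ + u) = v by omega, e₁, e₂, poch_natCast_add_one,
    poch_natCast_add_one, show u + v = N + m by omega, show N + ℓ + u + v = 2 * N + ℓ + m by omega,
    cast_choose ℝ (show N + ℓ ≤ N + (ℓ + u) by omega),
    cast_choose ℝ (show ℓ + u ≤ N + ℓ + m by omega),
    show N + (ℓ + u) - (N + ℓ) = u by omega, show N + ℓ + m - (ℓ + u) = v by omega,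
    show N + (ℓ + u) = N + ℓ + u by omega]
  field_simp

lemma J_natCast (ℓ m N : ℕ) (t : ℝ) :
    J (ℓ : ℝ) (m : ℝ) N t =
      (N + ℓ)! * (N + m)! / ((2 * N + ℓ + m)! * N !) *
        posJacobiSum (N + ℓ + m) ℓ N ((t - 1) / 2) := by
  rw [J, posJacobiSum, mul_sum]
  refine sum_congr rfl fun j hj => ?_
  obtain ⟨w, rfl⟩ : ∃ w, N = j + w := ⟨N - j, by have := mem_range.1 hj; omega⟩
  have e₁ : (j : ℝ) + ℓ + 1 = ((ℓ + j : ℕ) : ℝ) + 1 := by push_cast; ring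
  have e₂ : ((j + w : ℕ) : ℝ) + ℓ + m + j + 1 = ((j + w + ℓ + m + j : ℕ) : ℝ) + 1 := by
    push_cast; ring
  rw [show j + w - j = w by omega, e₁, e₂, poch_natCast_add_one, poch_natCast_add_one,
    show ℓ + j + w = j + w + ℓ by omega, show j + w + ℓ + m + j + w = 2 * (j + w) + ℓ + m by omega,
    cast_choose ℝ (show ℓ + j ≤ j + w + ℓ + m + j by omega),
    cast_choose ℝ (show j ≤ j + w by omega),
    show j + w + ℓ + m + j - (ℓ + j) = j + w + m by omega, show j + w - j = w by omega]
  field_simp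

theorem stmt4 (ℓ m n : ℕ) (h : m + ℓ ≤ n) (t : ℝ) :
    J (-(ℓ : ℝ)) (-(m : ℝ)) n t =
      (-1) ^ ℓ * ((n - m - ℓ).factorial : ℝ) / (2 ^ (ℓ + m) * (n.factorial : ℝ)) *
        (1 - t) ^ ℓ * (1 + t) ^ m * J (ℓ : ℝ) (m : ℝ) (n - ℓ - m) t := by
  obtain ⟨N, rfl⟩ : ∃ N, n = N + ℓ + m := ⟨n - ℓ - m, by omega⟩
  have hpow : (1 - t) ^ ℓ * (1 + t) ^ m =
      (-1) ^ ℓ * 2 ^ (ℓ + m) * (((t - 1) / 2) ^ ℓ * (1 + (t - 1) / 2) ^ m) := by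
    rw [show 1 - t = -1 * (2 * ((t - 1) / 2)) by ring,
      show 1 + t = 2 * (1 + (t - 1) / 2) by ring, mul_pow, mul_pow, mul_pow, pow_add]
    ring
  rw [show N + ℓ + m - m - ℓ = N by omega, show N + ℓ + m - ℓ - m = N by omega,
    mul_assoc _ ((1 - t) ^ ℓ), hpow, J_neg_natCast, J_natCast, negJacobiSum_eq_mul_posJacobiSum]
  field_simp
  ring_nf
  rw [pow_mul', neg_one_sq, one_pow, mul_one]
end

section
/- For n ≥ 1, J_n^{-n-1,-n}(t) = Σ_{k=0}^n (1/(k!(n-k)!)) ((t-1)/2)^k, and consequently J_n^{-n-1,-n}(t) = J_n^{-n,-n}(t) - (-1)·J_{n-1}^{-n,-n}(t), i.e. the recurrence J_n^{α,β} = J_n^{α+1,β} - τ_n^{α,β} J_{n-1}^{α+1,β} holds with the convention τ_n^{-n-1,-n} = -1. -/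
open Finset MeasureTheory

lemma poch_neg_natCast (m k : ℕ) : poch (-(m : ℝ)) k = (-1) ^ k * m.descFactorial k := by
  rw [poch, ascPochhammer_eval_neg_eq_descPochhammer, descPochhammer_eval_eq_descFactorial]

lemma poch_neg_natCast_of_lt {m k : ℕ} (h : m < k) : poch (-(m : ℝ)) k = 0 :=
  ascPochhammer_eval_neg_coe_nat_of_lt h

/-- The signs `(-1) ^ (n - k)` of the two Pochhammer symbols cancel. -/
lemma J_eq_sum_descFactorial (α β : ℝ) (n : ℕ) (t : ℝ) (a b : ℕ → ℕ)
    (ha : ∀ k ≤ n, (k : ℝ) + α + 1 = -(a k : ℝ))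
    (hb : ∀ k ≤ n, (n : ℝ) + α + β + k + 1 = -(b k : ℝ)) :
    J α β n t = ∑ k ∈ range (n + 1),
      ((a k).descFactorial (n - k) : ℝ) /
        (((n - k).factorial : ℝ) * k.factorial * (b k).descFactorial (n - k)) *
        ((t - 1) / 2) ^ k := by
  refine sum_congr rfl fun k hk => ?_
  have hkn : k ≤ n := Nat.lt_succ_iff.mp (mem_range.mp hk)
  rw [ha k hkn, hb k hkn, poch_neg_natCast, poch_neg_natCast, mul_left_comm,
    mul_div_mul_left _ _ (pow_ne_zero _ (by norm_num))]

lemma J_neg_sub_one_neg (n : ℕ) (t : ℝ) :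
    J (-(n : ℝ) - 1) (-(n : ℝ)) n t =
      ∑ k ∈ range (n + 1), 1 / ((k.factorial : ℝ) * (n - k).factorial) * ((t - 1) / 2) ^ k := by
  rw [J_eq_sum_descFactorial _ _ n t (fun k => n - k) (fun k => n - k)
    (fun k hk => by push_cast [hk]; ring) (fun k hk => by push_cast [hk]; ring)]
  refine sum_congr rfl fun k _ => ?_
  have : ((n - k).factorial : ℝ) ≠ 0 := by positivity
  rw [Nat.descFactorial_self]
  field_simp

lemma J_neg_neg_self (n : ℕ) (t : ℝ) :
    J (-(n : ℝ)) (-(n : ℝ)) n t = 1 / (n.factorial : ℝ) * ((t - 1) / 2) ^ n := by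
  rw [J, sum_range_succ, sum_eq_zero, zero_add]
  · simp [poch]
  · intro k hk
    have hkn : k < n := mem_range.mp hk
    have : (k : ℝ) + -n + 1 = -((n - k - 1 : ℕ) : ℝ) := by
      push_cast [Nat.sub_sub, Nat.succ_le_of_lt hkn]; ring
    rw [this, poch_neg_natCast_of_lt (by omega), zero_div, zero_mul]

lemma J_neg_neg_pred (n : ℕ) (hn : 1 ≤ n) (t : ℝ) :
    J (-(n : ℝ)) (-(n : ℝ)) (n - 1) t =
      ∑ k ∈ range n, 1 / ((k.factorial : ℝ) * (n - k).factorial) * ((t - 1) / 2) ^ k := by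
  obtain ⟨m, rfl⟩ : ∃ m, n = m + 1 := ⟨n - 1, by omega⟩
  rw [Nat.add_sub_cancel, J_eq_sum_descFactorial _ _ m t (fun k => m - k) (fun k => m + 1 - k)
    (fun k hk => by push_cast [hk]; ring)
    (fun k hk => by push_cast [hk, Nat.le_succ_of_le hk]; ring)]
  refine sum_congr rfl fun k hk => ?_
  have hkm : k ≤ m := Nat.lt_succ_iff.mp (mem_range.mp hk)
  have hdesc : (m + 1 - k).descFactorial (m - k) = (m + 1 - k).factorial := by
    have h := Nat.factorial_mul_descFactorial (show m - k ≤ m + 1 - k by omega)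
    rwa [show m + 1 - k - (m - k) = 1 by omega, Nat.factorial_one, one_mul] at h
  have : ((m - k).factorial : ℝ) ≠ 0 := by positivity
  rw [Nat.descFactorial_self, hdesc]
  field_simp

theorem stmt8 (n : ℕ) (hn : 1 ≤ n) (t : ℝ) :
    J (-(n : ℝ) - 1) (-(n : ℝ)) n t =
        ∑ k ∈ Finset.range (n + 1),
          1 / ((k.factorial : ℝ) * ((n - k).factorial : ℝ)) * ((t - 1) / 2) ^ k ∧
    J (-(n : ℝ) - 1) (-(n : ℝ)) n t =
        J (-(n : ℝ)) (-(n : ℝ)) n t - (-1) * J (-(n : ℝ)) (-(n : ℝ)) (n - 1) t := by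
  refine ⟨J_neg_sub_one_neg n t, ?_⟩
  rw [J_neg_sub_one_neg, J_neg_neg_self, J_neg_neg_pred n hn, sum_range_succ, Nat.sub_self,
    Nat.factorial_zero, Nat.cast_one, mul_one]
  ring
end

section
/- For α,β,γ ∈ ℝ and 0 ≤ k ≤ n, the Jacobi polynomials on the triangle satisfy (∂_y − ∂_x) J_{k,n}^{α,β,γ}(x,y) = J_{k-1,n-1}^{α+1,β+1,γ}(x,y), with the convention J_{k,n} = 0 for k < 0. -/
open Finset MeasureTheory

/-- Jacobi polynomial on the triangle with integer indices and the convention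
`J_{k,n} = 0` for `k < 0` or `k > n`. -/
noncomputable def JTz (α β γ : ℝ) (k n : ℤ) (x y : ℝ) : ℝ :=
  if 0 ≤ k ∧ k ≤ n then
    (x + y) ^ k.toNat * J α β k.toNat ((y - x) / (x + y)) *
      J (2 * (k : ℝ) + α + β + 1) γ (n - k).toNat (1 - 2 * x - 2 * y)
  else 0

/-!
In the coordinates `s = x + y`, `u = (y - x) / (x + y)` we have `J_{k,n} = h(s) J_k^{α,β}(u)` with
`h(s) = s^k J_{n-k}^{2k+α+β+1,γ}(1 - 2s)`. The operator `∂_y - ∂_x` kills `s` and sends `u` to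
`2 / s`, so it maps `J_{k,n}` to `2 h(s) (J_k^{α,β})'(u) / s`; the derivative rule
`(J_k^{α,β})' = J_{k-1}^{α+1,β+1} / 2` (and `(J_0)' = 0`) then gives `J_{k-1,n-1}^{α+1,β+1,γ}`.
-/

lemma J_zero (α β t : ℝ) : J α β 0 t = 1 := by
  simp [J, poch]

@[fun_prop]
lemma differentiable_J (α β : ℝ) (n : ℕ) : Differentiable ℝ (J α β n) := by
  unfold J
  fun_prop

-- `(j + 1) a_{j+1} = a'_j` for the coefficients `a` of `J_{n+1}^{α,β}` and `a'` of `J_n^{α+1,β+1}`.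
lemma J_coeff_succ_mul (α β : ℝ) (n j : ℕ) :
    poch ((j + 1 : ℕ) + α + 1) (n + 1 - (j + 1)) /
        (((n + 1 - (j + 1)).factorial : ℝ) * ((j + 1).factorial : ℝ) *
          poch ((n + 1 : ℕ) + α + β + (j + 1 : ℕ) + 1) (n + 1 - (j + 1))) * (j + 1 : ℕ)
      = poch (j + (α + 1) + 1) (n - j) /
        (((n - j).factorial : ℝ) * (j.factorial : ℝ) *
          poch (n + (α + 1) + (β + 1) + j + 1) (n - j)) := by
  rw [Nat.add_sub_add_right, Nat.factorial_succ]
  push_cast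
  rw [show (j : ℝ) + 1 + α + 1 = j + (α + 1) + 1 by ring,
    show (n : ℝ) + 1 + α + β + (j + 1) + 1 = n + (α + 1) + (β + 1) + j + 1 by ring]
  have hj : (j : ℝ) + 1 ≠ 0 := by positivity
  field_simp

lemma hasDerivAt_J_succ (α β : ℝ) (n : ℕ) (t : ℝ) :
    HasDerivAt (J α β (n + 1)) (J (α + 1) (β + 1) n t / 2) t := by
  have hterm (c : ℝ) (k : ℕ) : HasDerivAt (fun t : ℝ => c * ((t - 1) / 2) ^ k)
      (c * (k * ((t - 1) / 2) ^ (k - 1) * (1 / 2))) t :=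
    ((((hasDerivAt_id t).sub_const 1).div_const 2).pow k).const_mul c
  refine (HasDerivAt.fun_sum fun k _ => hterm _ k).congr_deriv ?_
  rw [Finset.sum_range_succ', J, Finset.sum_div]
  simp only [Nat.cast_zero, zero_mul, mul_zero, add_zero, Nat.add_sub_cancel]
  refine Finset.sum_congr rfl fun j _ => ?_
  linear_combination (((t - 1) / 2) ^ j / 2) * J_coeff_succ_mul α β n j

lemma deriv_J_zero (α β t : ℝ) : deriv (J α β 0) t = 0 := by
  simp [funext (J_zero α β)]

lemma deriv_J_succ (α β : ℝ) (n : ℕ) (t : ℝ) :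
    deriv (J α β (n + 1)) t = J (α + 1) (β + 1) n t / 2 :=
  (hasDerivAt_J_succ α β n t).deriv

lemma deriv_sub_deriv_comp_add_mul_comp_div {h g : ℝ → ℝ} {x y : ℝ} (hxy : x + y ≠ 0)
    (hh : DifferentiableAt ℝ h (x + y)) (hg : DifferentiableAt ℝ g ((y - x) / (x + y))) :
    deriv (fun y' => h (x + y') * g ((y' - x) / (x + y'))) y -
        deriv (fun x' => h (x' + y) * g ((y - x') / (x' + y))) x =
      2 * h (x + y) * deriv g ((y - x) / (x + y)) / (x + y) := by
  have hsy : HasDerivAt (fun y' => x + y') 1 y := (hasDerivAt_id' y).const_add x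
  have hsx : HasDerivAt (fun x' => x' + y) 1 x := (hasDerivAt_id' x).add_const y
  have huy : HasDerivAt (fun y' => (y' - x) / (x + y'))
      ((1 * (x + y) - (y - x) * 1) / (x + y) ^ 2) y :=
    ((hasDerivAt_id' y).sub_const x).div hsy hxy
  have hux : HasDerivAt (fun x' => (y - x') / (x' + y))
      ((-1 * (x + y) - (y - x) * 1) / (x + y) ^ 2) x :=
    ((hasDerivAt_id' x).const_sub y).div hsx hxy
  have hdy : HasDerivAt (fun y' => h (x + y') * g ((y' - x) / (x + y'))) _ y :=
    (hh.hasDerivAt.comp y hsy).mul (hg.hasDerivAt.comp y huy)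
  have hdx : HasDerivAt (fun x' => h (x' + y) * g ((y - x') / (x' + y))) _ x :=
    (hh.hasDerivAt.comp x hsx).mul (hg.hasDerivAt.comp x hux)
  rw [hdy.deriv, hdx.deriv, Function.comp_apply, Function.comp_apply]
  field_simp
  ring

theorem stmt14 (α β γ : ℝ) (k n : ℤ) (hk : 0 ≤ k) (hkn : k ≤ n)
    (x y : ℝ) (hxy : x + y ≠ 0) :
    deriv (fun y' => JTz α β γ k n x y') y - deriv (fun x' => JTz α β γ k n x' y) x =
      JTz (α + 1) (β + 1) γ (k - 1) (n - 1) x y := by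
  lift k to ℕ using hk with m
  set h : ℝ → ℝ := fun s => s ^ m * J (2 * m + α + β + 1) γ (n - m).toNat (1 - 2 * s) with h_def
  have hform (x' y' : ℝ) :
      JTz α β γ m n x' y' = h (x' + y') * J α β m ((y' - x') / (x' + y')) := by
    rw [JTz, if_pos ⟨Int.natCast_nonneg m, hkn⟩, Int.toNat_natCast, Int.cast_natCast, h_def]
    ring_nf
  have hh : Differentiable ℝ h := by
    simp only [h_def]
    fun_prop
  simp only [hform]
  rw [deriv_sub_deriv_comp_add_mul_comp_div hxy hh.differentiableAt
    (differentiable_J α β m).differentiableAt]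
  cases m with
  | zero => simp [deriv_J_zero, JTz]
  | succ j =>
    have hpred : ((j + 1 : ℕ) : ℤ) - 1 = j := by push_cast; ring
    rw [deriv_J_succ, hpred, JTz, if_pos ⟨Int.natCast_nonneg j, by omega⟩, Int.toNat_natCast,
      show n - 1 - j = n - (j + 1 : ℕ) by push_cast; ring,
      show 2 * ((j : ℤ) : ℝ) + (α + 1) + (β + 1) + 1 = 2 * ((j + 1 : ℕ) : ℝ) + α + β + 1 by
        push_cast; ring]
    simp only [h_def]
    field_simp
    ring_nf
end

section
/- Let m ≥ 1 and α > −m−1. Define the inner product ⟨f,g⟩ := ∫_0^1 f^{(m)}(t) g^{(m)}(t) (1−t)^{α+m} dt + Σ_{k=0}^{m−1} λ_k f^{(k)}(0) g^{(k)}(0) with λ_k > 0 on the space of polynomials. Then for n ≥ m + max{0, ⌊−α⌋}, the polynomials Ĵ_n(t) := J_n^{α,−m}(2t−1) satisfy ∂^k Ĵ_n(0) = 0 for 0 ≤ k ≤ m−1, and ⟨Ĵ_n, Ĵ_{n'}⟩ = 0 for n ≠ n' with both n, n' ≥ m + max{0, ⌊−α⌋}. -/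
open Finset MeasureTheory

/-! Both claims reduce to the vanishing of the `N`-th forward difference
`∑ j ≤ N, (-1)^j (N choose j) p(j)` of a polynomial `p` of degree `< N`.
Differentiating `t ↦ J_n^{α,β}(2t-1)` shifts `(α, β, n)` to `(α+1, β+1, n-1)`, so
`∂^k Ĵ_n(0) = J_{n-k}^{α+k,k-m}(-1) = ∑_j (-1)^j c_j`, where for `β = -r` the coefficient
`c_j` is, up to a factor independent of `j`, `(N choose j) (j+α+1)_{N-r}`.
After `m` derivatives `β = 0` and the weight exponent is `γ = α + m > -1`. Expanding in powers
of `1-t`, the moment `∫ Ĵ_N(t) (1-t)^{k+γ} dt` becomes `∑_j (-1)^j c_j / (γ+j+k+1)`, and for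
`k < N` the factor `γ+j+k+1` cancels against `(j+γ+1)_N`, leaving a polynomial of degree `N-1`
in `j`. -/

open Polynomial Nat

lemma poch_mul_poch_add (a : ℝ) (s t : ℕ) : poch a s * poch (a + s) t = poch a (s + t) := by
  simpa [poch, eval_comp] using congrArg (eval a) (ascPochhammer_mul ℝ s t)

lemma poch_one (a : ℝ) : poch a 1 = a := by
  simp [poch]

lemma poch_ne_zero {a : ℝ} {s : ℕ} (h : ∀ i < s, a + i ≠ 0) : poch a s ≠ 0 := by
  rw [poch, Ne, ascPochhammer_eval_eq_zero_iff]
  rintro ⟨i, hi, hia⟩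
  exact h i hi (by rw [hia]; ring)

lemma poch_add_eq_eval_comp (x c : ℝ) (s : ℕ) :
    poch (x + c) s = ((ascPochhammer ℝ s).comp (X + C c)).eval x := by
  simp [poch, eval_comp]

lemma natDegree_ascPochhammer_comp_X_add_C (s : ℕ) (c : ℝ) :
    ((ascPochhammer ℝ s).comp (X + C c)).natDegree = s := by
  rw [natDegree_comp, ascPochhammer_natDegree, natDegree_X_add_C, mul_one]

/-- The `N`-th forward difference of a polynomial of degree `< N` vanishes. -/
theorem sum_neg_one_pow_mul_choose_mul_eval_eq_zero {R : Type*} [CommRing R] {p : R[X]} {N : ℕ}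
    (hp : p.natDegree < N) :
    ∑ j ∈ range (N + 1), (-1) ^ j * N.choose j * p.eval (j : R) = 0 := by
  have h := congrFun (Polynomial.fwdDiff_iter_eq_zero_of_degree_lt hp) 0
  rw [fwdDiff_iter_eq_sum_shift, Pi.zero_apply] at h
  calc ∑ j ∈ range (N + 1), (-1) ^ j * N.choose j * p.eval (j : R)
      = (-1) ^ N *
          ∑ j ∈ range (N + 1),
            ((-1 : ℤ) ^ (N - j) * N.choose j) • p.eval (0 + j • 1) := by
        rw [mul_sum]
        refine sum_congr rfl fun j hj => ?_
        have hsign : (-1 : R) ^ j = (-1) ^ N * (-1) ^ (N - j) := by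
          rw [← pow_add, show N + (N - j) = j + 2 * (N - j) by grind, pow_add, pow_mul]
          simp
        simp only [zsmul_eq_mul, Int.cast_mul, Int.cast_pow, Int.cast_neg, Int.cast_one,
          Int.cast_natCast, zero_add, nsmul_eq_mul, mul_one, hsign]
        ring
    _ = 0 := by rw [h, mul_zero]

noncomputable def Jcoeff (α β : ℝ) (n k : ℕ) : ℝ :=
  poch ((k : ℝ) + α + 1) (n - k) /
      (((n - k).factorial : ℝ) * (k.factorial : ℝ) *
        poch ((n : ℝ) + α + β + (k : ℝ) + 1) (n - k))

lemma J_eq_sum_Jcoeff (α β : ℝ) (n : ℕ) (t : ℝ) :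
    J α β n t = ∑ k ∈ range (n + 1), Jcoeff α β n k * ((t - 1) / 2) ^ k :=
  rfl

/-- For `β = -r` the coefficients of `J` are, up to a factor independent of `j`,
the binomial coefficients times a polynomial of degree `N - r` in `j`. -/
lemma Jcoeff_neg_natCast_mul (A : ℝ) {N r j : ℕ} (hrN : r ≤ N) (hj : j ≤ N)
    (hA : ∀ l : ℕ, N - r < l → A + l ≠ 0) :
    Jcoeff A (-r) N j * (N ! * poch (A + N + 1) (N - r)) =
      N.choose j * poch (j + A + 1) (N - r) := by
  set a : ℝ := j + A + 1
  have hQ : poch ((N : ℝ) + A + -r + j + 1) (N - j) ≠ 0 :=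
    poch_ne_zero fun i _ => by
      convert hA (N - r + j + 1 + i) (by omega) using 1
      push_cast [Nat.cast_sub hrN]
      ring
  have h1 := poch_mul_poch_add a (N - j) (N - r)
  have h2 := poch_mul_poch_add a (N - r) (N - j)
  rw [show a + ((N - j : ℕ) : ℝ) = A + N + 1 by push_cast [Nat.cast_sub hj]; ring] at h1
  rw [show a + ((N - r : ℕ) : ℝ) = N + A + -r + j + 1 by push_cast [Nat.cast_sub hrN]; ring,
    add_comm (N - r)] at h2
  have hfact : (N ! : ℝ) = N.choose j * j ! * (N - j)! := by
    exact_mod_cast (Nat.choose_mul_factorial_mul_factorial hj).symm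
  rw [Jcoeff, div_mul_eq_mul_div, div_eq_iff (by positivity)]
  linear_combination (N.choose j * j ! * (N - j)! : ℝ) * (h1 - h2) +
    poch a (N - j) * poch (A + N + 1) (N - r) * hfact

theorem J_neg_natCast_neg_one (A : ℝ) {N r : ℕ} (hr : 1 ≤ r) (hrN : r ≤ N)
    (hA : ∀ l : ℕ, N - r < l → A + l ≠ 0) : J A (-r) N (-1) = 0 := by
  have hD : (N ! : ℝ) * poch (A + N + 1) (N - r) ≠ 0 :=
    mul_ne_zero (by positivity) <| poch_ne_zero fun i _ => by
      convert hA (N + 1 + i) (by omega) using 1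
      push_cast
      ring
  suffices J A (-r) N (-1) * (N ! * poch (A + N + 1) (N - r)) = 0 by simpa [hD] using this
  calc J A (-r) N (-1) * (N ! * poch (A + N + 1) (N - r))
      = ∑ j ∈ range (N + 1), (-1) ^ j * N.choose j *
          ((ascPochhammer ℝ (N - r)).comp (X + C (A + 1))).eval (j : ℝ) := by
        rw [J_eq_sum_Jcoeff, sum_mul]
        refine sum_congr rfl fun j hj => ?_
        rw [← poch_add_eq_eval_comp, ← add_assoc, mul_right_comm,
          Jcoeff_neg_natCast_mul A hrN (Nat.lt_succ_iff.mp (mem_range.mp hj)) hA]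
        rw [show ((-1 : ℝ) - 1) / 2 = -1 by norm_num]
        ring
    _ = 0 := sum_neg_one_pow_mul_choose_mul_eval_eq_zero <| by
        rw [natDegree_ascPochhammer_comp_X_add_C]
        omega

lemma sum_Jcoeff_zero_mul_neg_one_pow_div_eq_zero {γ : ℝ} (hγ : -1 < γ) {N k : ℕ}
    (hk : k < N) :
    ∑ j ∈ range (N + 1), Jcoeff γ 0 N j * (-1) ^ j / (γ + (j + k : ℕ) + 1) = 0 := by
  have hpos : ∀ l : ℕ, 0 < l → 0 < γ + l := fun l hl => by
    have : (1 : ℝ) ≤ l := by exact_mod_cast hl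
    linarith
  have hD : (N ! : ℝ) * poch (γ + N + 1) N ≠ 0 :=
    mul_ne_zero (by positivity) (ascPochhammer_pos _ _ (by linarith [hpos N (by omega)])).ne'
  -- `poch (j + γ + 1) N` divided by its factor `j + γ + 1 + k`, a polynomial of degree `N - 1`
  set p : ℝ[X] := (ascPochhammer ℝ k).comp (X + C (γ + 1)) *
    (ascPochhammer ℝ (N - k - 1)).comp (X + C (γ + 1 + k + 1))
  have hp : ∀ j : ℕ, poch (j + γ + 1) N = (γ + (j + k : ℕ) + 1) * p.eval (j : ℝ) := by
    intro j
    have h1 := poch_mul_poch_add (j + γ + 1) k (N - k)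
    have h2 := poch_mul_poch_add (j + γ + 1 + k) 1 (N - k - 1)
    rw [show k + (N - k) = N by omega] at h1
    rw [show 1 + (N - k - 1) = N - k by omega] at h2
    simp only [p, eval_mul, ← poch_add_eq_eval_comp, ← h1, ← h2, poch_one]
    rw [show (j : ℝ) + (γ + 1) = j + γ + 1 by ring,
      show (j : ℝ) + (γ + 1 + k + 1) = j + γ + 1 + k + (1 : ℕ) by push_cast; ring]
    push_cast
    ring
  suffices (∑ j ∈ range (N + 1), Jcoeff γ 0 N j * (-1) ^ j / (γ + (j + k : ℕ) + 1)) *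
      (N ! * poch (γ + N + 1) N) = 0 by simpa [hD] using this
  calc (∑ j ∈ range (N + 1), Jcoeff γ 0 N j * (-1) ^ j / (γ + (j + k : ℕ) + 1)) *
        (N ! * poch (γ + N + 1) N)
      = ∑ j ∈ range (N + 1), (-1) ^ j * N.choose j * p.eval (j : ℝ) := by
        rw [sum_mul]
        refine sum_congr rfl fun j hj => ?_
        have hJ := Jcoeff_neg_natCast_mul γ (Nat.zero_le N) (Nat.lt_succ_iff.mp (mem_range.mp hj))
          fun l hl => (hpos l (by omega)).ne'
        simp only [CharP.cast_eq_zero, neg_zero, Nat.sub_zero, hp] at hJ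
        have hne : γ + (j + k : ℕ) + 1 ≠ 0 := by
          simpa [add_assoc] using (hpos (j + k + 1) (by omega)).ne'
        rw [div_mul_eq_mul_div, div_eq_iff hne, mul_right_comm, hJ]
        ring
    _ = 0 := sum_neg_one_pow_mul_choose_mul_eval_eq_zero <| by
        refine (natDegree_mul_le).trans_lt ?_
        rw [natDegree_ascPochhammer_comp_X_add_C, natDegree_ascPochhammer_comp_X_add_C]
        omega

lemma J_two_mul_sub_one_eq_sum_sub_one_pow (α β : ℝ) (n : ℕ) (t : ℝ) :
    J α β n (2 * t - 1) = ∑ k ∈ range (n + 1), Jcoeff α β n k * (t - 1) ^ k := by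
  rw [J_eq_sum_Jcoeff]
  congr! 3
  ring

lemma J_two_mul_sub_one_eq_sum_one_sub_pow (α β : ℝ) (n : ℕ) (t : ℝ) :
    J α β n (2 * t - 1) = ∑ k ∈ range (n + 1), Jcoeff α β n k * (-1) ^ k * (1 - t) ^ k := by
  rw [J_two_mul_sub_one_eq_sum_sub_one_pow]
  refine sum_congr rfl fun k _ => ?_
  rw [mul_assoc, ← mul_pow]
  ring_nf

lemma succ_mul_Jcoeff_succ (α β : ℝ) (n j : ℕ) :
    ((j : ℝ) + 1) * Jcoeff α β (n + 1) (j + 1) = Jcoeff (α + 1) (β + 1) n j := by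
  simp only [Jcoeff, Nat.succ_sub_succ, Nat.factorial_succ]
  push_cast
  rw [show (n : ℝ) + 1 + α + β + (j + 1) + 1 = n + (α + 1) + (β + 1) + j + 1 by ring,
    show (j : ℝ) + 1 + α + 1 = j + (α + 1) + 1 by ring]
  field_simp

lemma hasDerivAt_J_two_mul_sub_one (α β : ℝ) (n : ℕ) (t : ℝ) :
    HasDerivAt (fun t => J α β (n + 1) (2 * t - 1)) (J (α + 1) (β + 1) n (2 * t - 1)) t := by
  simp_rw [J_two_mul_sub_one_eq_sum_sub_one_pow]
  have h : HasDerivAt (fun t => ∑ k ∈ range (n + 2), Jcoeff α β (n + 1) k * (t - 1) ^ k)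
      (∑ k ∈ range (n + 2), Jcoeff α β (n + 1) k * (k * (t - 1) ^ (k - 1))) t :=
    HasDerivAt.fun_sum fun k _ => by
      simpa using (((hasDerivAt_id t).sub_const 1).fun_pow k).const_mul (Jcoeff α β (n + 1) k)
  convert h using 1
  rw [sum_range_succ' _ (n + 1)]
  simp only [CharP.cast_eq_zero, zero_mul, mul_zero, add_zero, ← succ_mul_Jcoeff_succ]
  refine sum_congr rfl fun j _ => ?_
  push_cast
  ring

lemma iteratedDeriv_J_two_mul_sub_one {k n : ℕ} (hk : k ≤ n) (α β : ℝ) :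
    iteratedDeriv k (fun t => J α β n (2 * t - 1)) =
      fun t => J (α + k) (β + k) (n - k) (2 * t - 1) := by
  induction k generalizing n α β with
  | zero => simp
  | succ k ih =>
    obtain ⟨n, rfl⟩ : ∃ n', n = n' + 1 := ⟨n - 1, by omega⟩
    rw [iteratedDeriv_succ', funext fun t => (hasDerivAt_J_two_mul_sub_one α β n t).deriv,
      ih (by omega)]
    push_cast
    simp only [add_assoc, add_comm (1 : ℝ)]

lemma intervalIntegrable_mul_one_sub_rpow {γ : ℝ} (hγ : -1 < γ) {f : ℝ → ℝ}
    (hf : Continuous f) :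
    IntervalIntegrable (fun t => f t * (1 - t) ^ γ) volume 0 1 := by
  have h := (intervalIntegral.intervalIntegrable_rpow' hγ (a := 0) (b := 1)).comp_sub_left 1
  rw [sub_zero, sub_self] at h
  exact h.symm.continuousOn_mul hf.continuousOn

lemma integral_one_sub_pow_mul_rpow {γ : ℝ} (hγ : -1 < γ) (c : ℕ) :
    ∫ t in (0 : ℝ)..1, (1 - t) ^ c * (1 - t) ^ γ = 1 / (γ + c + 1) := by
  rw [intervalIntegral.integral_comp_sub_left (fun s => s ^ c * s ^ γ) 1]
  simp only [sub_self, sub_zero]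
  have hc : -1 < γ + c := by linarith [(Nat.cast_nonneg c : (0 : ℝ) ≤ c)]
  rw [intervalIntegral.integral_congr_ae (g := fun s => s ^ (γ + c))
      (Filter.Eventually.of_forall fun s hs => by
        rw [Set.uIoc_of_le zero_le_one] at hs
        rw [Real.rpow_add hs.1, Real.rpow_natCast, mul_comm]),
    integral_rpow (Or.inl hc), Real.one_rpow, Real.zero_rpow (by linarith), sub_zero]

theorem integral_J_mul_one_sub_pow_mul_rpow_eq_zero {γ : ℝ} (hγ : -1 < γ) {N k : ℕ}
    (hk : k < N) :
    ∫ t in (0 : ℝ)..1, J γ 0 N (2 * t - 1) * ((1 - t) ^ k * (1 - t) ^ γ) = 0 := by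
  have hexpand : (fun t : ℝ => J γ 0 N (2 * t - 1) * ((1 - t) ^ k * (1 - t) ^ γ)) = fun t =>
      ∑ j ∈ range (N + 1), Jcoeff γ 0 N j * (-1) ^ j * ((1 - t) ^ (j + k) * (1 - t) ^ γ) := by
    funext t
    rw [J_two_mul_sub_one_eq_sum_one_sub_pow, sum_mul]
    exact sum_congr rfl fun j _ => by ring
  rw [hexpand, intervalIntegral.integral_finsetSum fun j _ =>
    (intervalIntegrable_mul_one_sub_rpow hγ (by fun_prop)).const_mul _]
  simp_rw [intervalIntegral.integral_const_mul, integral_one_sub_pow_mul_rpow hγ, mul_one_div]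
  exact sum_Jcoeff_zero_mul_neg_one_pow_div_eq_zero hγ hk

theorem integral_J_mul_J_eq_zero_of_lt {γ : ℝ} (hγ : -1 < γ) {N N' : ℕ} (h : N' < N) :
    ∫ t in (0 : ℝ)..1, J γ 0 N (2 * t - 1) * J γ 0 N' (2 * t - 1) * (1 - t) ^ γ = 0 := by
  have hexpand : (fun t : ℝ => J γ 0 N (2 * t - 1) * J γ 0 N' (2 * t - 1) * (1 - t) ^ γ) =
      fun t => ∑ k ∈ range (N' + 1),
        Jcoeff γ 0 N' k * (-1) ^ k * (J γ 0 N (2 * t - 1) * ((1 - t) ^ k * (1 - t) ^ γ)) := by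
    funext t
    rw [J_two_mul_sub_one_eq_sum_one_sub_pow γ 0 N', mul_sum, sum_mul]
    exact sum_congr rfl fun k _ => by ring
  have hcont : Continuous (J γ 0 N) := by
    unfold J
    fun_prop
  have hint : ∀ k : ℕ, IntervalIntegrable
      (fun t => J γ 0 N (2 * t - 1) * ((1 - t) ^ k * (1 - t) ^ γ)) volume 0 1 := fun k => by
    simpa only [mul_assoc] using intervalIntegrable_mul_one_sub_rpow
      (f := fun t => J γ 0 N (2 * t - 1) * (1 - t) ^ k) hγ (by fun_prop)
  rw [hexpand, intervalIntegral.integral_finsetSum fun k _ => (hint k).const_mul _]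
  simp_rw [intervalIntegral.integral_const_mul]
  exact sum_eq_zero fun k hk => by
    rw [integral_J_mul_one_sub_pow_mul_rpow_eq_zero hγ (by grind), mul_zero]

theorem integral_J_mul_J_eq_zero {γ : ℝ} (hγ : -1 < γ) {N N' : ℕ} (h : N ≠ N') :
    ∫ t in (0 : ℝ)..1, J γ 0 N (2 * t - 1) * J γ 0 N' (2 * t - 1) * (1 - t) ^ γ = 0 := by
  rcases h.lt_or_gt with h | h
  · simpa only [mul_comm (J γ 0 N _)] using integral_J_mul_J_eq_zero_of_lt hγ h
  · exact integral_J_mul_J_eq_zero_of_lt hγ h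

lemma iteratedDeriv_J_two_mul_sub_one_zero_eq_zero (α : ℝ) {m n k : ℕ} (hk : k < m)
    (hmn : m ≤ n) (hα : ∀ l : ℕ, n - m < l → α + l ≠ 0) :
    iteratedDeriv k (fun t => J α (-(m : ℝ)) n (2 * t - 1)) 0 = 0 := by
  rw [iteratedDeriv_J_two_mul_sub_one (hk.le.trans hmn),
    show -(m : ℝ) + k = -((m - k : ℕ) : ℝ) by push_cast [Nat.cast_sub hk.le]; ring]
  simp only [mul_zero, zero_sub]
  refine J_neg_natCast_neg_one _ (by omega) (by omega) fun l hl => ?_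
  simpa [add_assoc, add_comm (k : ℝ)] using hα (l + k) (by omega)

theorem stmt18_general (m : ℕ) (α : ℝ) (hα : -(m : ℝ) - 1 < α)
    (lam : ℕ → ℝ)
    (n n' : ℕ) (hn : (m : ℤ) + max 0 ⌊-α⌋ ≤ (n : ℤ))
    (hn' : (m : ℤ) + max 0 ⌊-α⌋ ≤ (n' : ℤ)) :
    (∀ k < m, iteratedDeriv k (fun t => J α (-(m : ℝ)) n (2 * t - 1)) 0 = 0) ∧
    (n ≠ n' →
      (∫ t in (0:ℝ)..1,
          iteratedDeriv m (fun s => J α (-(m : ℝ)) n (2 * s - 1)) t *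
            iteratedDeriv m (fun s => J α (-(m : ℝ)) n' (2 * s - 1)) t *
            (1 - t) ^ (α + (m : ℝ)))
        + ∑ k ∈ Finset.range m,
            lam k * iteratedDeriv k (fun s => J α (-(m : ℝ)) n (2 * s - 1)) 0 *
              iteratedDeriv k (fun s => J α (-(m : ℝ)) n' (2 * s - 1)) 0 = 0) := by
  have hmn : m ≤ n := by have := le_max_left 0 ⌊-α⌋; omega
  have hmn' : m ≤ n' := by have := le_max_left 0 ⌊-α⌋; omega
  have hαl : ∀ l : ℕ, n - m < l → α + l ≠ 0 := fun l hl => by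
    have hfloor : ⌊-α⌋ + 1 ≤ (l : ℤ) := by have := le_max_right 0 ⌊-α⌋; omega
    have : -α < l := (Int.lt_floor_add_one (-α)).trans_le (by exact_mod_cast hfloor)
    linarith
  have hvanish := fun k (hk : k < m) => iteratedDeriv_J_two_mul_sub_one_zero_eq_zero α hk hmn hαl
  refine ⟨hvanish, fun hne => ?_⟩
  rw [sum_eq_zero fun k hk => by rw [hvanish k (mem_range.mp hk), mul_zero, zero_mul], add_zero,
    iteratedDeriv_J_two_mul_sub_one hmn, iteratedDeriv_J_two_mul_sub_one hmn', neg_add_cancel]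
  exact integral_J_mul_J_eq_zero (by linarith) (by omega)

theorem stmt18 (m : ℕ) (hm : 1 ≤ m) (α : ℝ) (hα : -(m : ℝ) - 1 < α)
    (lam : ℕ → ℝ) (hlam : ∀ k < m, 0 < lam k)
    (n n' : ℕ) (hn : (m : ℤ) + max 0 ⌊-α⌋ ≤ (n : ℤ))
    (hn' : (m : ℤ) + max 0 ⌊-α⌋ ≤ (n' : ℤ)) :
    (∀ k < m, iteratedDeriv k (fun t => J α (-(m : ℝ)) n (2 * t - 1)) 0 = 0) ∧
    (n ≠ n' →
      (∫ t in (0:ℝ)..1,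
          iteratedDeriv m (fun s => J α (-(m : ℝ)) n (2 * s - 1)) t *
            iteratedDeriv m (fun s => J α (-(m : ℝ)) n' (2 * s - 1)) t *
            (1 - t) ^ (α + (m : ℝ)))
        + ∑ k ∈ Finset.range m,
            lam k * iteratedDeriv k (fun s => J α (-(m : ℝ)) n (2 * s - 1)) 0 *
              iteratedDeriv k (fun s => J α (-(m : ℝ)) n' (2 * s - 1)) 0 = 0) :=
  stmt18_general m α hα lam n n' hn hn'
end
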